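/- arXiv:0705.0636 — 2 statements merged into one kernel-verified Lean document; each statement's English description precedes it below -/
import Mathlib

section
/- For every p > 1 there exists a constant C_p > 0 such that for all integers N ≥ 2, |∫_0^1 |D_N(x)|^p dx − δ_p N^{p−1}| ≤ C_p · max(N^{p−3}, log N, 1), where δ_p = (2/π) ∫_0^∞ |sin u / u|^p du and D_N(x) = sin(Nπx)/sin(πx) in modulus. -/
/-!
By the symmetry `x ↦ 1 - x` it suffices to integrate over `[0, 1/2]`. There the integrand
`|sin (Nπx) / sin (πx)|^p` is compared with `|sin (Nπx) / (πx)|^p`, whose integral rescales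
(`u = Nπx`) to `N^(p-1)/π · ∫₀^{Nπ/2} |sin u / u|^p`; the missing tail
`∫_{Nπ/2}^∞ |sin u / u|^p ≤ (Nπ/2)^(1-p)/(p-1)` costs only `O(1)` after multiplication by
`N^(p-1)`. Since `1 - sin t / t ≤ t²/6`, Bernoulli's inequality bounds the difference of the two
integrands by `p π² x²/6` times the first one, which is at most `N^p` for `x ≤ 1/N` and at most
`(2x)^(-p)` beyond. Integrating `N^p x²` over `[0, 1/N]` gives `N^(p-3)/3`, and `x^(2-p)` over
`[1/N, 1/2]` gives `O(N^(p-3))`, `O(log N)` or `O(1)` according as `p > 3`, `p = 3` or `p < 3`.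
-/

open Real MeasureTheory Set

noncomputable def errorScale (p : ℝ) (N : ℕ) : ℝ := max (max ((N : ℝ) ^ (p - 3)) (log N)) 1

-- `|D_N(x)|^p` off the integers; at the integers division by zero makes it `0^p`.
noncomputable def dirichletPow (p : ℝ) (N : ℕ) (x : ℝ) : ℝ := |sin (N * π * x) / sin (π * x)| ^ p

noncomputable def sincPow (p u : ℝ) : ℝ := |sin u / u| ^ p

theorem abs_sin_nat_mul_le (N : ℕ) (t : ℝ) : |sin (N * t)| ≤ N * |sin t| := by
  induction N with
  | zero => simp
  | succ k ih =>
    rw [Nat.cast_succ, add_mul, one_mul, sin_add]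
    calc |sin (k * t) * cos t + cos (k * t) * sin t|
        ≤ |sin (k * t)| * |cos t| + |cos (k * t)| * |sin t| :=
          (abs_add_le _ _).trans_eq (by rw [abs_mul, abs_mul])
      _ ≤ |sin (k * t)| + |sin t| :=
          add_le_add (mul_le_of_le_one_right (abs_nonneg _) (abs_cos_le_one _))
            (mul_le_of_le_one_left (abs_nonneg _) (abs_cos_le_one _))
      _ ≤ (k + 1) * |sin t| := by linarith

theorem one_sub_sin_div_le {t : ℝ} (ht : 0 < t) : 1 - sin t / t ≤ t ^ 2 / 6 := by
  have : 1 - t ^ 2 / 6 ≤ sin t / t := by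
    rw [le_div_iff₀ ht]
    linarith [sin_ge_sub_cube ht.le, show (1 - t ^ 2 / 6) * t = t - t ^ 3 / 6 by ring]
  linarith

theorem sin_pi_mul_pos {x : ℝ} (hx0 : 0 < x) (hx1 : x < 1) : 0 < sin (π * x) :=
  sin_pos_of_pos_of_lt_pi (by positivity) (by nlinarith [pi_pos])

theorem rpow_div_sub_rpow_div_le {m s t p : ℝ} (hm : 0 ≤ m) (hs : 0 < s) (hst : s ≤ t)
    (hp : 1 ≤ p) : (m / s) ^ p - (m / t) ^ p ≤ p * (1 - s / t) * (m / s) ^ p := by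
  have ht : 0 < t := hs.trans_le hst
  have hbernoulli : 1 + p * (s / t - 1) ≤ (s / t) ^ p := by
    simpa using one_add_mul_self_le_rpow_one_add (s := s / t - 1)
      (by linarith [div_nonneg hs.le ht.le]) hp
  have hsplit : (m / t) ^ p = (m / s) ^ p * (s / t) ^ p := by
    rw [← mul_rpow (div_nonneg hm hs.le) (div_nonneg hs.le ht.le)]
    field_simp
  rw [hsplit]
  nlinarith [rpow_nonneg (div_nonneg hm hs.le) p]

theorem norm_sum_exp_eq_abs_sin_div_sin {x : ℝ} (hx : sin (π * x) ≠ 0) (N : ℕ) :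
    ‖∑ ν ∈ Finset.range N, Complex.exp (2 * π * Complex.I * ν * x)‖ =
      |sin (N * π * x) / sin (π * x)| := by
  set z := Complex.exp (Complex.I * ↑(2 * π * x))
  have hpow (n : ℕ) : Complex.exp (2 * π * Complex.I * n * x) = z ^ n := by
    rw [← Complex.exp_nat_mul]; push_cast; ring_nf
  have hnorm (n : ℕ) : ‖z ^ n - 1‖ = 2 * |sin (n * π * x)| := by
    rw [← hpow, show 2 * π * Complex.I * n * x = Complex.I * ↑(2 * π * n * x) by push_cast; ring,
      Complex.norm_exp_I_mul_ofReal_sub_one, norm_mul, Real.norm_eq_abs, Real.norm_eq_abs,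
      abs_two]
    ring_nf
  have hz : ‖z - 1‖ = 2 * |sin (π * x)| := by simpa using hnorm 1
  have hz1 : z ≠ 1 := by
    rw [← sub_ne_zero, ← norm_ne_zero_iff, hz]
    exact mul_ne_zero two_ne_zero (abs_ne_zero.mpr hx)
  rw [Finset.sum_congr rfl fun ν _ => hpow ν, geom_sum_eq hz1, norm_div, hnorm, hz, abs_div,
    mul_div_mul_left _ _ two_ne_zero]

theorem measurable_dirichletPow (p : ℝ) (N : ℕ) : Measurable (dirichletPow p N) := by
  unfold dirichletPow; fun_prop

theorem measurable_sincPow (p : ℝ) : Measurable (sincPow p) := by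
  unfold sincPow; fun_prop

section Bounds

variable {p : ℝ} {N : ℕ} {x : ℝ}

theorem dirichletPow_nonneg (p : ℝ) (N : ℕ) (x : ℝ) : 0 ≤ dirichletPow p N x :=
  rpow_nonneg (abs_nonneg _) _

theorem sincPow_nonneg (p u : ℝ) : 0 ≤ sincPow p u :=
  rpow_nonneg (abs_nonneg _) _

theorem abs_sin_nat_mul_div_sin_le (N : ℕ) (t : ℝ) : |sin (N * t) / sin t| ≤ N := by
  rcases eq_or_ne (sin t) 0 with h | h
  · simp [h]
  · rw [abs_div, div_le_iff₀ (abs_pos.mpr h)]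
    exact abs_sin_nat_mul_le N t

theorem dirichletPow_le (hp : 0 ≤ p) (N : ℕ) (x : ℝ) : dirichletPow p N x ≤ (N : ℝ) ^ p := by
  have := abs_sin_nat_mul_div_sin_le N (π * x)
  rw [← mul_assoc] at this
  exact rpow_le_rpow (abs_nonneg _) this hp

theorem dirichletPow_le_of_le_half (hp : 0 ≤ p) (hx0 : 0 < x) (hx : x ≤ 1 / 2) :
    dirichletPow p N x ≤ (2 * x) ^ (-p) := by
  have hsin : 2 * x ≤ sin (π * x) :=
    calc 2 * x = 2 / π * (π * x) := by field_simp
      _ ≤ sin (π * x) := mul_le_sin (by positivity) (by nlinarith [pi_pos])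
  rw [rpow_neg (by positivity), ← inv_rpow (by positivity)]
  refine rpow_le_rpow (abs_nonneg _) ?_ hp
  rw [abs_div, abs_of_pos (show 0 < sin (π * x) by linarith), ← one_div]
  exact div_le_div₀ zero_le_one (abs_sin_le_one _) (by positivity) hsin

theorem dirichletPow_one_sub (p : ℝ) (N : ℕ) (x : ℝ) :
    dirichletPow p N (1 - x) = dirichletPow p N x := by
  rw [dirichletPow, dirichletPow, mul_one_sub, mul_one_sub, sin_pi_sub, sin_nat_mul_pi_sub,
    abs_div, abs_div, abs_neg, abs_mul, abs_pow, abs_neg, abs_one, one_pow, one_mul]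

theorem sincPow_le_one (hp : 0 ≤ p) (u : ℝ) : sincPow p u ≤ 1 := by
  refine rpow_le_one (abs_nonneg _) ?_ hp
  rcases eq_or_ne u 0 with rfl | hu
  · simp
  · rw [abs_div, div_le_one (abs_pos.mpr hu)]
    exact abs_sin_le_abs

theorem sincPow_le_rpow_neg (hp : 0 ≤ p) {u : ℝ} (hu : 0 < u) : sincPow p u ≤ u ^ (-p) := by
  rw [rpow_neg hu.le, ← inv_rpow hu.le]
  refine rpow_le_rpow (abs_nonneg _) ?_ hp
  rw [abs_div, abs_of_pos hu, ← one_div]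
  exact div_le_div_of_nonneg_right (abs_sin_le_one u) hu.le

end Bounds

theorem intervalIntegrable_dirichletPow {p : ℝ} (hp : 0 ≤ p) (N : ℕ) (a b : ℝ) :
    IntervalIntegrable (dirichletPow p N) volume a b :=
  intervalIntegrable_const.mono_fun' (measurable_dirichletPow p N).aestronglyMeasurable
    (ae_of_all _ fun x => (norm_of_nonneg (dirichletPow_nonneg p N x)).trans_le
      (dirichletPow_le hp N x))

theorem intervalIntegrable_sincPow {p : ℝ} (hp : 0 ≤ p) (a b : ℝ) :
    IntervalIntegrable (sincPow p) volume a b :=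
  intervalIntegrable_const.mono_fun' (measurable_sincPow p).aestronglyMeasurable
    (ae_of_all _ fun u => (norm_of_nonneg (sincPow_nonneg p u)).trans_le (sincPow_le_one hp u))

theorem intervalIntegrable_rpow_mul_sincPow {p : ℝ} (hp : 0 ≤ p) (N : ℕ) (a b : ℝ) :
    IntervalIntegrable (fun x => (N : ℝ) ^ p * sincPow p (N * π * x)) volume a b :=
  intervalIntegrable_const.mono_fun'
    ((((measurable_sincPow p).comp (measurable_const.mul measurable_id)).const_mul
      _).aestronglyMeasurable)
    (ae_of_all _ fun x =>
      (norm_of_nonneg (mul_nonneg (by positivity) (sincPow_nonneg _ _))).trans_le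
        (mul_le_of_le_one_right (by positivity) (sincPow_le_one hp _)))

theorem integrableOn_sincPow_Ioi {p : ℝ} (hp : 1 < p) : IntegrableOn (sincPow p) (Ioi 0) := by
  rw [← Ioc_union_Ioi_eq_Ioi zero_le_one]
  refine IntegrableOn.union ?_ ?_
  · exact (intervalIntegrable_iff_integrableOn_Ioc_of_le zero_le_one).mp
      (intervalIntegrable_sincPow (by linarith) 0 1)
  · refine (integrableOn_Ioi_rpow_of_lt (by linarith : -p < -1) zero_lt_one).mono'
      (measurable_sincPow p).aestronglyMeasurable ?_
    filter_upwards [ae_restrict_mem measurableSet_Ioi] with u hu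
    rw [norm_of_nonneg (sincPow_nonneg p u)]
    exact sincPow_le_rpow_neg (by linarith) (zero_lt_one.trans hu)

theorem integral_norm_sum_exp_rpow {p : ℝ} (hp : 0 ≤ p) (N : ℕ) :
    ∫ x in (0 : ℝ)..1, ‖∑ ν ∈ Finset.range N, Complex.exp (2 * π * Complex.I * ν * x)‖ ^ p =
      2 * ∫ x in (0 : ℝ)..1 / 2, dirichletPow p N x := by
  have hkernel : ∫ x in (0 : ℝ)..1,
      ‖∑ ν ∈ Finset.range N, Complex.exp (2 * π * Complex.I * ν * x)‖ ^ p =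
        ∫ x in (0 : ℝ)..1, dirichletPow p N x := by
    simp only [intervalIntegral.integral_of_le zero_le_one, integral_Ioc_eq_integral_Ioo]
    refine setIntegral_congr_fun measurableSet_Ioo fun x hx => ?_
    rw [norm_sum_exp_eq_abs_sin_div_sin (sin_pi_mul_pos hx.1 hx.2).ne' N, dirichletPow]
  have hsymm : ∫ x in (1 / 2 : ℝ)..1, dirichletPow p N x =
      ∫ x in (0 : ℝ)..1 / 2, dirichletPow p N x := by
    convert (intervalIntegral.integral_comp_sub_left (dirichletPow p N) (a := 0) (b := 1 / 2)
      1).symm using 1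
    · norm_num
    · simp only [dirichletPow_one_sub]
  rw [hkernel, ← intervalIntegral.integral_add_adjacent_intervals
    (intervalIntegrable_dirichletPow hp N 0 (1 / 2)) (intervalIntegrable_dirichletPow hp N _ 1),
    hsymm, two_mul]

section Comparison

variable {p : ℝ} {N : ℕ} {x : ℝ}

theorem rpow_mul_sincPow_eq (hN : 0 < N) (hx : 0 < x) :
    (N : ℝ) ^ p * sincPow p (N * π * x) = (|sin (N * π * x)| / (π * x)) ^ p := by
  rw [sincPow, ← mul_rpow (Nat.cast_nonneg N) (abs_nonneg _), abs_div,
    abs_of_pos (by positivity : 0 < (N : ℝ) * π * x)]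
  congr 1
  field_simp

theorem dirichletPow_eq (hx0 : 0 < x) (hx1 : x < 1) :
    dirichletPow p N x = (|sin (N * π * x)| / sin (π * x)) ^ p := by
  rw [dirichletPow, abs_div, abs_of_pos (sin_pi_mul_pos hx0 hx1)]

theorem rpow_mul_sincPow_le_dirichletPow (hp : 0 ≤ p) (hN : 0 < N) (hx0 : 0 < x) (hx1 : x < 1) :
    (N : ℝ) ^ p * sincPow p (N * π * x) ≤ dirichletPow p N x := by
  rw [rpow_mul_sincPow_eq hN hx0, dirichletPow_eq hx0 hx1]
  have hs := sin_pi_mul_pos hx0 hx1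
  gcongr
  exact sin_le (by positivity)

theorem dirichletPow_sub_rpow_mul_sincPow_le (hp : 1 ≤ p) (hN : 0 < N) (hx0 : 0 < x)
    (hx1 : x < 1) :
    dirichletPow p N x - (N : ℝ) ^ p * sincPow p (N * π * x) ≤
      p * π ^ 2 / 6 * (x ^ 2 * dirichletPow p N x) := by
  rw [rpow_mul_sincPow_eq hN hx0, dirichletPow_eq hx0 hx1]
  have hs := sin_pi_mul_pos hx0 hx1
  refine (rpow_div_sub_rpow_div_le (abs_nonneg _) hs (sin_le (by positivity)) hp).trans ?_
  have hsin := one_sub_sin_div_le (by positivity : 0 < π * x)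
  have hG := rpow_nonneg (div_nonneg (abs_nonneg (sin (N * π * x))) hs.le) p
  calc _ ≤ p * ((π * x) ^ 2 / 6) * (|sin (N * π * x)| / sin (π * x)) ^ p := by gcongr
    _ = _ := by ring

end Comparison

section MainTerm

variable {p : ℝ}

theorem integral_rpow_mul_sincPow {N : ℕ} (hN : 0 < N) :
    ∫ x in (0 : ℝ)..1 / 2, (N : ℝ) ^ p * sincPow p (N * π * x) =
      (N : ℝ) ^ (p - 1) / π * ∫ u in (0 : ℝ)..N * π / 2, sincPow p u := by
  have hN0 : (N : ℝ) ≠ 0 := by positivity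
  rw [intervalIntegral.integral_const_mul,
    intervalIntegral.integral_comp_mul_left (sincPow p) (by positivity : (N : ℝ) * π ≠ 0),
    smul_eq_mul, mul_zero, mul_one_div, rpow_sub_one hN0, ← mul_assoc, mul_div_assoc]
  congr 1
  field_simp

theorem integral_Ioi_sincPow_le (hp : 1 < p) {T : ℝ} (hT : 0 < T) :
    ∫ u in Ioi T, sincPow p u ≤ T ^ (1 - p) / (p - 1) :=
  calc ∫ u in Ioi T, sincPow p u ≤ ∫ u in Ioi T, u ^ (-p) :=
        setIntegral_mono_on ((integrableOn_sincPow_Ioi hp).mono_set (Ioi_subset_Ioi hT.le))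
          (integrableOn_Ioi_rpow_of_lt (by linarith) hT) measurableSet_Ioi
          fun u hu => sincPow_le_rpow_neg (by linarith) (hT.trans hu)
    _ = T ^ (1 - p) / (p - 1) := by
        rw [integral_Ioi_rpow_of_lt (by linarith) hT, neg_div, ← div_neg, neg_add',
          neg_neg, ← sub_eq_neg_add]

theorem main_term_sub_two_mul_integral_mem_Icc (hp : 1 < p) {N : ℕ} (hN : 0 < N) :
    (2 / π * ∫ u in Ioi 0, sincPow p u) * (N : ℝ) ^ (p - 1) -
        2 * ∫ x in (0 : ℝ)..1 / 2, (N : ℝ) ^ p * sincPow p (N * π * x) ∈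
      Icc 0 (2 / π * (π / 2) ^ (1 - p) / (p - 1)) := by
  have hT : 0 < (N : ℝ) * π / 2 := by positivity
  have htail := integral_Ioi_sincPow_le hp hT
  have hscale : (N : ℝ) ^ (p - 1) * ((N : ℝ) * π / 2) ^ (1 - p) = (π / 2) ^ (1 - p) := by
    rw [mul_div_assoc, mul_rpow (Nat.cast_nonneg N) (by positivity), ← mul_assoc,
      ← rpow_add (by positivity), sub_add_sub_cancel', sub_self, rpow_zero, one_mul]
  have hexpr : (2 / π * ∫ u in Ioi 0, sincPow p u) * (N : ℝ) ^ (p - 1) -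
      2 * ∫ x in (0 : ℝ)..1 / 2, (N : ℝ) ^ p * sincPow p (N * π * x) =
        2 / π * ((N : ℝ) ^ (p - 1) * ∫ u in Ioi ((N : ℝ) * π / 2), sincPow p u) := by
    rw [integral_rpow_mul_sincPow hN,
      ← intervalIntegral.integral_Ioi_sub_Ioi (integrableOn_sincPow_Ioi hp) hT.le]
    ring
  have htail0 : 0 ≤ ∫ u in Ioi ((N : ℝ) * π / 2), sincPow p u :=
    setIntegral_nonneg measurableSet_Ioi fun u _ => sincPow_nonneg p u
  rw [hexpr]
  refine ⟨by positivity, ?_⟩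
  calc _ ≤ 2 / π * ((N : ℝ) ^ (p - 1) * (((N : ℝ) * π / 2) ^ (1 - p) / (p - 1))) := by gcongr
    _ = 2 / π * (π / 2) ^ (1 - p) / (p - 1) := by rw [← mul_div_assoc, hscale, mul_div_assoc]

end MainTerm

section ErrorTerm

variable {p : ℝ}

theorem rpow_le_errorScale (p : ℝ) (N : ℕ) : (N : ℝ) ^ (p - 3) ≤ errorScale p N :=
  (le_max_left _ _).trans (le_max_left _ _)

theorem log_le_errorScale (p : ℝ) (N : ℕ) : log N ≤ errorScale p N :=
  (le_max_right _ _).trans (le_max_left _ _)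

theorem one_le_errorScale (p : ℝ) (N : ℕ) : 1 ≤ errorScale p N :=
  le_max_right _ _

theorem exists_integral_rpow_le_errorScale (p : ℝ) :
    ∃ C > 0, ∀ N : ℕ, 2 ≤ N → ∫ x in (N : ℝ)⁻¹..1 / 2, x ^ (2 - p) ≤ C * errorScale p N := by
  have hpos {N : ℕ} (hN : 2 ≤ N) : (0 : ℝ) < N := by positivity
  have hzero {N : ℕ} (hN : 2 ≤ N) : (0 : ℝ) ∉ uIcc (N : ℝ)⁻¹ (1 / 2) :=
    notMem_uIcc_of_lt (by have := hpos hN; positivity) (by norm_num)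
  rcases lt_trichotomy p 3 with hp | rfl | hp
  · refine ⟨1 / (3 - p), by bound, fun N hN => ?_⟩
    rw [integral_rpow (Or.inl (by linarith)), show 2 - p + 1 = 3 - p by ring]
    calc _ ≤ 1 / (3 - p) := by
          gcongr
          exact (sub_le_self _ (by have := hpos hN; positivity)).trans
            (rpow_le_one (by norm_num) (by norm_num) (by linarith))
      _ ≤ _ := le_mul_of_one_le_right (by bound) (one_le_errorScale p N)
  · refine ⟨1, one_pos, fun N hN => ?_⟩
    have hinv (x : ℝ) : x ^ (2 - 3 : ℝ) = x⁻¹ := by norm_num [rpow_neg_one]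
    rw [intervalIntegral.integral_congr fun x _ => hinv x, integral_inv (hzero hN), one_mul]
    refine (log_le_log (by have := hpos hN; positivity) ?_).trans (log_le_errorScale 3 N)
    rw [div_inv_eq_mul]
    linarith [hpos hN]
  · refine ⟨1 / (p - 3), by bound, fun N hN => ?_⟩
    rw [integral_rpow (Or.inr ⟨by linarith, hzero hN⟩), show 2 - p + 1 = 3 - p by ring,
      inv_rpow (hpos hN).le, ← rpow_neg (hpos hN).le, neg_sub, ← neg_sub p 3, div_neg, ← neg_div,
      neg_sub, one_div_mul_eq_div]
    gcongr
    exact (sub_le_self _ (by positivity)).trans (rpow_le_errorScale p N)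

theorem exists_integral_sq_mul_dirichletPow_le (hp : 0 ≤ p) :
    ∃ C > 0, ∀ N : ℕ, 2 ≤ N →
      ∫ x in (0 : ℝ)..1 / 2, x ^ 2 * dirichletPow p N x ≤ C * errorScale p N := by
  obtain ⟨C, hC, hCN⟩ := exists_integral_rpow_le_errorScale p
  refine ⟨1 / 3 + 2 ^ (-p) * C, by positivity, fun N hN => ?_⟩
  have hN0 : (0 : ℝ) < N := by positivity
  have hNinv : (N : ℝ)⁻¹ ≤ 1 / 2 := by
    rw [one_div]; exact inv_anti₀ two_pos (by exact_mod_cast hN)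
  have hint (a b : ℝ) : IntervalIntegrable (fun x => x ^ 2 * dirichletPow p N x) volume a b :=
    (intervalIntegrable_dirichletPow hp N a b).continuousOn_mul (continuousOn_pow 2)
  have hnear : ∫ x in (0 : ℝ)..(N : ℝ)⁻¹, x ^ 2 * dirichletPow p N x ≤ (N : ℝ) ^ (p - 3) / 3 :=
    calc _ ≤ ∫ x in (0 : ℝ)..(N : ℝ)⁻¹, (N : ℝ) ^ p * x ^ 2 :=
          intervalIntegral.integral_mono_on (by positivity) (hint _ _)
            ((continuous_const.mul (continuous_pow 2)).intervalIntegrable _ _)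
            fun x _ => by rw [mul_comm]; gcongr; exact dirichletPow_le hp N x
      _ = (N : ℝ) ^ (p - 3) / 3 := by
          rw [intervalIntegral.integral_const_mul, integral_pow, rpow_sub hN0, rpow_ofNat]
          norm_num
          field_simp
  have hfar : ∫ x in (N : ℝ)⁻¹..1 / 2, x ^ 2 * dirichletPow p N x ≤
      2 ^ (-p) * (C * errorScale p N) :=
    calc _ ≤ ∫ x in (N : ℝ)⁻¹..1 / 2, 2 ^ (-p) * x ^ (2 - p) := by
          refine intervalIntegral.integral_mono_on hNinv (hint _ _)
            ((intervalIntegral.intervalIntegrable_rpow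
              (Or.inr (notMem_uIcc_of_lt (by positivity) (by norm_num)))).const_mul _)
            fun x hx => ?_
          have hx0 : 0 < x := (inv_pos.mpr hN0).trans_le hx.1
          calc x ^ 2 * dirichletPow p N x ≤ x ^ 2 * (2 * x) ^ (-p) := by
                gcongr; exact dirichletPow_le_of_le_half hp hx0 hx.2
            _ = 2 ^ (-p) * x ^ (2 - p) := by
                rw [mul_rpow two_pos.le hx0.le, sub_eq_add_neg, rpow_add hx0, rpow_two]
                ring
      _ ≤ 2 ^ (-p) * (C * errorScale p N) := by
          rw [intervalIntegral.integral_const_mul]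
          gcongr
          exact hCN N hN
  rw [← intervalIntegral.integral_add_adjacent_intervals (hint 0 (N : ℝ)⁻¹) (hint _ (1 / 2))]
  linarith [rpow_le_errorScale p N]

theorem integral_dirichletPow_sub_mem_Icc (hp : 1 ≤ p) {N : ℕ} (hN : 0 < N) :
    (∫ x in (0 : ℝ)..1 / 2, dirichletPow p N x) -
        ∫ x in (0 : ℝ)..1 / 2, (N : ℝ) ^ p * sincPow p (N * π * x) ∈
      Icc 0 (p * π ^ 2 / 6 * ∫ x in (0 : ℝ)..1 / 2, x ^ 2 * dirichletPow p N x) := by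
  have hG := intervalIntegrable_dirichletPow (by linarith) N 0 (1 / 2)
  have hH := intervalIntegrable_rpow_mul_sincPow (by linarith) N 0 (1 / 2)
  rw [← intervalIntegral.integral_sub hG hH, ← intervalIntegral.integral_const_mul]
  constructor
  · simpa using intervalIntegral.integral_mono_on_of_le_Ioo (by norm_num)
      intervalIntegrable_const (hG.sub hH) fun x hx =>
        sub_nonneg.mpr (rpow_mul_sincPow_le_dirichletPow (by linarith) hN hx.1 (by linarith [hx.2]))
  · exact intervalIntegral.integral_mono_on_of_le_Ioo (by norm_num) (hG.sub hH)
      ((hG.continuousOn_mul (continuousOn_pow 2)).const_mul _) fun x hx =>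
        dirichletPow_sub_rpow_mul_sincPow_le hp hN hx.1 (by linarith [hx.2])

end ErrorTerm

theorem stmt_4 (p : ℝ) (hp : 1 < p) :
    ∃ C > 0, ∀ N : ℕ, 2 ≤ N →
      |(∫ x in (0:ℝ)..1,
          (‖∑ ν ∈ Finset.range N, Complex.exp (2 * Real.pi * Complex.I * ν * x)‖) ^ p)
        - ((2 / Real.pi) * ∫ u in Set.Ioi (0:ℝ), |Real.sin u / u| ^ p) * (N : ℝ) ^ (p - 1)|
      ≤ C * max (max ((N : ℝ) ^ (p - 3)) (Real.log N)) 1 := by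
  obtain ⟨C, hC, hCN⟩ := exists_integral_sq_mul_dirichletPow_le (p := p) (by linarith)
  have hK : 0 < 2 / π * (π / 2) ^ (1 - p) / (p - 1) := div_pos (by positivity) (by linarith)
  refine ⟨p * π ^ 2 / 3 * C + 2 / π * (π / 2) ^ (1 - p) / (p - 1), by positivity, fun N hN => ?_⟩
  obtain ⟨herr₀, herr⟩ := integral_dirichletPow_sub_mem_Icc hp.le (by omega : 0 < N)
  obtain ⟨hmain₀, hmain⟩ := main_term_sub_two_mul_integral_mem_Icc hp (by omega : 0 < N)
  have hCE := mul_le_mul_of_nonneg_left (hCN N hN) (by positivity : 0 ≤ p * π ^ 2 / 6)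
  have hKE := le_mul_of_one_le_right hK.le (one_le_errorScale p N)
  rw [integral_norm_sum_exp_rpow (by linarith) N]
  change |_ - (2 / π * ∫ u in Ioi 0, sincPow p u) * _| ≤ _ * errorScale p N
  rw [abs_le]
  constructor <;> linarith
end

section
/- For all real ξ, all integers N ≥ 1, all x ∈ R, and all ω ∈ (0,1), ∫_0^1 |f_θ(x)|² dθ ≥ (sin(πω)/π)² |D_N(x−ξ)|², where f_θ(x) := ∑_{n∈S_θ} e(nx) and S_θ := {n : 1 ≤ n ≤ N, ‖nξ − θ‖ ≤ ω/2} (‖·‖ denoting distance to the nearest integer). -/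
open Real MeasureTheory

/-- The Dirichlet kernel `D_N(y) = ∑_{ν=0}^{N-1} e(νy)` with `e(y) = exp(2πiy)`. -/
noncomputable def Dker (N : ℕ) (y : ℝ) : ℂ :=
  ∑ ν ∈ Finset.range N, Complex.exp (2 * Real.pi * Complex.I * ν * y)

/-!
Test `θ ↦ f_θ(x)` against `e(-θ)`. Since `θ ↦ 1{‖a - θ‖ ≤ ω/2}` is `1`-periodic and, on the
period centred at `a`, the indicator of `[a - ω/2, a + ω/2]`, its integral against `e(-θ)` is
`e(-a) sin(πω)/π`. Summing over `n` with `a = nξ` gives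
`∫₀¹ f_θ(x) e(-θ) dθ = (sin(πω)/π) e(x - ξ) D_N(x - ξ)`, and on the probability space `[0, 1]`
the square of the modulus of an integral is at most the integral of the squared modulus.
-/

open Complex (I)
open scoped Complex

def nearSet (a r : ℝ) : Set ℝ := {θ | |a - θ - round (a - θ)| ≤ r}

lemma measurableSet_nearSet (a r : ℝ) : MeasurableSet (nearSet a r) := by
  have : Measurable fun θ : ℝ => (round (a - θ) : ℝ) := by
    simp only [round_eq]
    fun_prop
  exact measurableSet_le (by fun_prop) measurable_const

lemma add_one_mem_nearSet_iff {a r θ : ℝ} : θ + 1 ∈ nearSet a r ↔ θ ∈ nearSet a r := by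
  simp only [nearSet, Set.mem_ofPred_eq, sub_add_eq_sub_sub, round_sub_one]
  push_cast
  ring_nf

lemma mem_nearSet_iff_of_mem_Ioc {a r θ : ℝ} (hθ : θ ∈ Set.Ioc (a - 1 / 2) (a + 1 / 2)) :
    θ ∈ nearSet a r ↔ θ ∈ Set.Icc (a - r) (a + r) := by
  have hround : round (a - θ) = 0 :=
    round_eq_zero_iff.2 ⟨by linarith [hθ.2], by linarith [hθ.1]⟩
  simp only [nearSet, Set.mem_ofPred_eq, hround, Int.cast_zero, sub_zero, abs_le, Set.mem_Icc]
  constructor <;> rintro ⟨h₁, h₂⟩ <;> constructor <;> linarith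

lemma integral_exp_neg_two_pi_I_mul_symm (a r : ℝ) :
    ∫ θ in (a - r)..(a + r), cexp (-2 * π * I * θ) =
      cexp (-2 * π * I * a) * ↑(sin (2 * π * r) / π) := by
  have hc : (-2 * π * I : ℂ) ≠ 0 := by simp [Real.pi_ne_zero, Complex.I_ne_zero]
  have hπ : (π : ℂ) ≠ 0 := Complex.ofReal_ne_zero.2 Real.pi_ne_zero
  rw [integral_exp_mul_complex hc]
  push_cast
  rw [Complex.sin, show -2 * π * I * (a + r) = -2 * π * I * a + -(2 * π * r * I) by ring,
    show -2 * π * I * (a - r) = -2 * π * I * a + 2 * π * r * I by ring, Complex.exp_add,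
    Complex.exp_add]
  field_simp
  ring_nf
  simp only [Complex.I_sq]
  ring

lemma periodic_indicator_nearSet_mul_exp (a r : ℝ) :
    Function.Periodic ((nearSet a r).indicator fun θ : ℝ => cexp (-2 * π * I * θ)) 1 := by
  intro θ
  have hexp : cexp (-2 * π * I * ↑(θ + 1)) = cexp (-2 * π * I * θ) := by
    rw [Complex.ofReal_add, Complex.ofReal_one, mul_add, mul_one, Complex.exp_add,
      show -2 * π * I = -(2 * π * I) by ring, Complex.exp_neg, Complex.exp_two_pi_mul_I,
      inv_one, mul_one]
  exact Set.indicator_eq_indicator add_one_mem_nearSet_iff hexp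

lemma integral_indicator_nearSet_mul_exp {a r : ℝ} (hr₀ : 0 ≤ r) (hr₁ : r < 1 / 2) :
    ∫ θ in (0 : ℝ)..1, (nearSet a r).indicator (fun θ : ℝ => cexp (-2 * π * I * θ)) θ =
      cexp (-2 * π * I * a) * ↑(sin (2 * π * r) / π) := by
  have hshift := (periodic_indicator_nearSet_mul_exp a r).intervalIntegral_add_eq 0 (a - 1 / 2)
  rw [zero_add, show a - 1 / 2 + 1 = a + 1 / 2 by ring] at hshift
  have hsub : Set.Icc (a - r) (a + r) ⊆ Set.Ioc (a - 1 / 2) (a + 1 / 2) :=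
    fun θ ⟨h₁, h₂⟩ => ⟨by linarith, by linarith⟩
  rw [hshift, intervalIntegral.integral_of_le (by linarith),
    setIntegral_congr_fun measurableSet_Ioc
      (g := (Set.Icc (a - r) (a + r)).indicator fun θ : ℝ => cexp (-2 * π * I * θ))
      fun θ hθ => Set.indicator_eq_indicator (mem_nearSet_iff_of_mem_Ioc hθ) rfl,
    setIntegral_indicator measurableSet_Icc, Set.inter_eq_self_of_subset_right hsub,
    integral_Icc_eq_integral_Ioc, ← intervalIntegral.integral_of_le (by linarith),
    integral_exp_neg_two_pi_I_mul_symm]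

lemma intervalIntegrable_indicator_nearSet_mul_exp (a r u v : ℝ) :
    IntervalIntegrable ((nearSet a r).indicator fun θ : ℝ => cexp (-2 * π * I * θ)) volume u v :=
  have h := (by fun_prop : Continuous fun θ : ℝ => cexp (-2 * π * I * θ)).intervalIntegrable u v
  ⟨h.1.indicator (measurableSet_nearSet a r), h.2.indicator (measurableSet_nearSet a r)⟩

lemma integral_sum_indicator_nearSet_mul_exp {ι : Type*} (s : Finset ι) (a : ι → ℝ) (c : ι → ℂ)
    {r : ℝ} (hr₀ : 0 ≤ r) (hr₁ : r < 1 / 2) :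
    ∫ θ in (0 : ℝ)..1,
        (∑ n ∈ s, (nearSet (a n) r).indicator (fun _ => c n) θ) * cexp (-2 * π * I * θ) =
      ↑(sin (2 * π * r) / π) * ∑ n ∈ s, c n * cexp (-2 * π * I * a n) := by
  have hterm : ∀ n θ, (nearSet (a n) r).indicator (fun _ => c n) θ * cexp (-2 * π * I * θ) =
      c n * (nearSet (a n) r).indicator (fun θ : ℝ => cexp (-2 * π * I * θ)) θ := by
    intro n θ
    by_cases h : θ ∈ nearSet (a n) r <;> simp [h]
  simp only [Finset.sum_mul, hterm]
  rw [intervalIntegral.integral_finsetSum fun n _ =>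
    (intervalIntegrable_indicator_nearSet_mul_exp _ _ _ _).const_mul _, Finset.mul_sum]
  refine Finset.sum_congr rfl fun n _ => ?_
  rw [intervalIntegral.integral_const_mul, integral_indicator_nearSet_mul_exp hr₀ hr₁]
  ring

lemma memLp_sum_indicator_nearSet_mul_exp {ι : Type*} (s : Finset ι) (a : ι → ℝ) (c : ι → ℂ)
    (r : ℝ) (p : ENNReal) (μ : Measure ℝ) [IsFiniteMeasure μ] :
    MemLp (fun θ : ℝ =>
      (∑ n ∈ s, (nearSet (a n) r).indicator (fun _ => c n) θ) * cexp (-2 * π * I * θ)) p μ := by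
  have hmeas : Measurable fun θ : ℝ => ∑ n ∈ s, (nearSet (a n) r).indicator (fun _ => c n) θ :=
    Finset.measurable_fun_sum s fun n _ => measurable_const.indicator (measurableSet_nearSet _ _)
  refine MemLp.of_bound (by fun_prop) (∑ n ∈ s, ‖c n‖) (Filter.Eventually.of_forall fun θ => ?_)
  rw [norm_mul, show ‖cexp (-2 * π * I * θ)‖ = 1 by simp [Complex.norm_exp], mul_one]
  exact (norm_sum_le _ _).trans (Finset.sum_le_sum fun n _ => norm_indicator_le_norm_self _ _)

lemma sq_norm_integral_le_integral_sq_norm {α E : Type*} [MeasurableSpace α] {μ : Measure α}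
    [IsProbabilityMeasure μ] [NormedAddCommGroup E] [NormedSpace ℝ E] {f : α → E}
    (hf : MemLp f 2 μ) : ‖∫ x, f x ∂μ‖ ^ 2 ≤ ∫ x, ‖f x‖ ^ 2 ∂μ := by
  have hvar := ProbabilityTheory.variance_eq_sub hf.norm
  have := ProbabilityTheory.variance_nonneg (fun x => ‖f x‖) μ
  calc ‖∫ x, f x ∂μ‖ ^ 2 ≤ (∫ x, ‖f x‖ ∂μ) ^ 2 :=
        pow_le_pow_left₀ (norm_nonneg _) (norm_integral_le_integral_norm f) 2
    _ ≤ ∫ x, ‖f x‖ ^ 2 ∂μ := by simp only [Pi.pow_apply] at hvar; linarith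

lemma norm_sum_Icc_exp_eq_norm_Dker (N : ℕ) (y : ℝ) :
    ‖∑ n ∈ Finset.Icc 1 N, cexp (2 * π * I * n * y)‖ = ‖Dker N y‖ := by
  have hshift : ∑ n ∈ Finset.Icc 1 N, cexp (2 * π * I * n * y) =
      cexp (2 * π * I * y) * Dker N y := by
    rw [Dker, Finset.mul_sum, ← Finset.Ico_add_one_right_eq_Icc, Finset.sum_Ico_eq_sum_range]
    refine Finset.sum_congr rfl fun ν _ => ?_
    rw [← Complex.exp_add]
    push_cast
    ring_nf
  rw [hshift, norm_mul]
  simp [Complex.norm_exp]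

theorem stmt_12_general (ξ : ℝ) (N : ℕ) (x : ℝ) (ω : ℝ) (hω : ω ∈ Set.Ioo 0 1) :
    (Real.sin (Real.pi * ω) / Real.pi) ^ 2 * ‖Dker N (x - ξ)‖ ^ 2 ≤
      ∫ θ in (0:ℝ)..1,
        (‖∑ n ∈ (Finset.Icc 1 N).filter
            (fun n : ℕ => |(n : ℝ) * ξ - θ - round ((n : ℝ) * ξ - θ)| ≤ ω / 2),
          Complex.exp (2 * Real.pi * Complex.I * n * x)‖) ^ 2 := by
  set g : ℝ → ℂ := fun θ => ∑ n ∈ Finset.Icc 1 N,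
    (nearSet (n * ξ) (ω / 2)).indicator (fun _ => cexp (2 * π * I * n * x)) θ
  have hg : ∀ θ : ℝ, ∑ n ∈ (Finset.Icc 1 N).filter
      (fun n : ℕ => |(n : ℝ) * ξ - θ - round ((n : ℝ) * ξ - θ)| ≤ ω / 2),
      cexp (2 * π * I * n * x) = g θ := fun θ => by
    simp only [g, Finset.sum_filter, Set.indicator_apply, nearSet, Set.mem_ofPred_eq]
  have hcoef := integral_sum_indicator_nearSet_mul_exp (Finset.Icc 1 N) (fun n : ℕ => n * ξ)
    (fun n : ℕ => cexp (2 * π * I * n * x)) (r := ω / 2) (by linarith [hω.1]) (by linarith [hω.2])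
  rw [show 2 * π * (ω / 2) = π * ω by ring] at hcoef
  have hD : ∑ n ∈ Finset.Icc 1 N, cexp (2 * π * I * n * x) * cexp (-2 * π * I * ↑(n * ξ)) =
      ∑ n ∈ Finset.Icc 1 N, cexp (2 * π * I * n * ↑(x - ξ)) :=
    Finset.sum_congr rfl fun n _ => by rw [← Complex.exp_add]; push_cast; ring_nf
  have : IsProbabilityMeasure (volume.restrict (Set.Ioc (0 : ℝ) 1)) := ⟨by simp⟩
  calc (sin (π * ω) / π) ^ 2 * ‖Dker N (x - ξ)‖ ^ 2
      = ‖∫ θ in (0 : ℝ)..1, g θ * cexp (-2 * π * I * θ)‖ ^ 2 := by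
        rw [hcoef, hD, norm_mul, norm_sum_Icc_exp_eq_norm_Dker, Complex.norm_real,
          Real.norm_eq_abs, mul_pow, sq_abs]
    _ ≤ ∫ θ in (0 : ℝ)..1, ‖g θ * cexp (-2 * π * I * θ)‖ ^ 2 := by
        simp only [intervalIntegral.integral_of_le zero_le_one]
        exact sq_norm_integral_le_integral_sq_norm
          (memLp_sum_indicator_nearSet_mul_exp _ _ _ _ _ _)
    _ = _ := by simp [hg, Complex.norm_exp]

theorem stmt_12 (ξ : ℝ) (N : ℕ) (hN : 1 ≤ N) (x : ℝ) (ω : ℝ) (hω : ω ∈ Set.Ioo 0 1) :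
    (Real.sin (Real.pi * ω) / Real.pi) ^ 2 * ‖Dker N (x - ξ)‖ ^ 2 ≤
      ∫ θ in (0:ℝ)..1,
        (‖∑ n ∈ (Finset.Icc 1 N).filter
            (fun n : ℕ => |(n : ℝ) * ξ - θ - round ((n : ℝ) * ξ - θ)| ≤ ω / 2),
          Complex.exp (2 * Real.pi * Complex.I * n * x)‖) ^ 2 :=
  stmt_12_general ξ N x ω hω
end
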